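/- arXiv:2306.03625 — 4 statements merged into one kernel-verified Lean document; each statement's English description precedes it below -/
import Mathlib

section
/- Let (Ω, F, P) be a probability space and let Δ, Δ̂ : Ω → ℝ be measurable. Assume Δ satisfies the margin condition with exponent α > 0 and constant C > 0, i.e. P(|Δ| ≤ t) ≤ C·t^α for all t ≥ 0, and assume Δ̂ − Δ is essentially bounded with M = ‖Δ̂ − Δ‖_{L^∞(P)}. Then E[Δ · (1{Δ > 0} − 1{Δ̂ > 0})] ≤ C · M^{1+α}. -/
/-!
Where the plug-in rule `1{Δ̂ > 0}` disagrees with `1{Δ > 0}`, `Δ` and `Δ̂` have opposite signs, so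
`|Δ| ≤ |Δ̂ - Δ| ≤ M` there, and the integrand is at most `M · 1{|Δ| ≤ M}`. Integrating and applying
the margin condition at `t = M` gives `M · P(|Δ| ≤ M) ≤ C · M ^ (1 + α)`.
-/

open MeasureTheory
open scoped ENNReal

lemma mul_ite_pos_sub_ite_pos_nonneg (d e : ℝ) :
    0 ≤ d * ((if 0 < d then (1 : ℝ) else 0) - (if 0 < e then (1 : ℝ) else 0)) := by
  by_cases hd : 0 < d <;> by_cases he : 0 < e <;> simp [hd, he] <;> linarith

lemma mul_ite_pos_sub_ite_pos_le {d e M : ℝ} (hM : 0 ≤ M) (hde : |e - d| ≤ M) :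
    d * ((if 0 < d then (1 : ℝ) else 0) - (if 0 < e then (1 : ℝ) else 0))
      ≤ if |d| ≤ M then M else 0 := by
  obtain ⟨hlow, hupp⟩ := abs_le.mp hde
  by_cases hd : 0 < d <;> by_cases he : 0 < e
  · simp [hd, he]; split_ifs <;> linarith
  · have : |d| ≤ M := by rw [abs_of_pos hd]; linarith
    simp [hd, he, this]; linarith
  · have : |d| ≤ M := by rw [abs_of_nonpos (not_lt.mp hd)]; linarith
    simp [hd, he, this]; linarith
  · simp [hd, he]; split_ifs <;> linarith

lemma MeasureTheory.MemLp.ae_abs_le_toReal_eLpNorm_top {Ω : Type*} [MeasurableSpace Ω] {P : Measure Ω}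
    {f : Ω → ℝ} (hf : MemLp f ∞ P) : ∀ᵐ ω ∂P, |f ω| ≤ (eLpNorm f ∞ P).toReal := by
  filter_upwards [enorm_ae_le_eLpNormEssSup f P] with ω hω
  rw [← eLpNorm_exponent_top] at hω
  simpa [Real.norm_eq_abs] using ENNReal.toReal_mono hf.eLpNorm_ne_top hω

lemma integral_regret_le_measureReal_mul {Ω : Type*} [MeasurableSpace Ω] (P : Measure Ω)
    [IsFiniteMeasure P] {Δ Δhat : Ω → ℝ} (hΔ : Measurable Δ) (hbdd : MemLp (Δhat - Δ) ∞ P) :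
    ∫ ω, Δ ω * ((if 0 < Δ ω then (1 : ℝ) else 0) - (if 0 < Δhat ω then (1 : ℝ) else 0)) ∂P
      ≤ P.real {ω | |Δ ω| ≤ (eLpNorm (Δhat - Δ) ∞ P).toReal}
        * (eLpNorm (Δhat - Δ) ∞ P).toReal := by
  set M := (eLpNorm (Δhat - Δ) ∞ P).toReal
  have hM : 0 ≤ M := ENNReal.toReal_nonneg
  have hs : MeasurableSet {ω | |Δ ω| ≤ M} := measurableSet_le hΔ.abs measurable_const
  calc _ ≤ ∫ ω, {ω | |Δ ω| ≤ M}.indicator (fun _ ↦ M) ω ∂P := by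
        refine integral_mono_of_nonneg
          (.of_forall fun ω ↦ mul_ite_pos_sub_ite_pos_nonneg _ _)
          ((integrable_const M).indicator hs) ?_
        filter_upwards [hbdd.ae_abs_le_toReal_eLpNorm_top] with ω hω
        simpa [Set.indicator_apply] using mul_ite_pos_sub_ite_pos_le hM hω
    _ = P.real {ω | |Δ ω| ≤ M} * M := by
        rw [integral_indicator_const M hs, smul_eq_mul]

theorem stmt_3_general {Ω : Type*} [MeasurableSpace Ω] (P : Measure Ω) [IsProbabilityMeasure P]
    (Δ Δhat : Ω → ℝ) (hΔ : Measurable Δ)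
    (α C : ℝ) (hα : 0 < α)
    (hmargin : ∀ t : ℝ, 0 ≤ t → (P {ω | |Δ ω| ≤ t}).toReal ≤ C * t ^ α)
    (hbdd : MemLp (Δhat - Δ) ∞ P) :
    ∫ ω, Δ ω * ((if 0 < Δ ω then (1 : ℝ) else 0) - (if 0 < Δhat ω then (1 : ℝ) else 0)) ∂P
      ≤ C * (eLpNorm (Δhat - Δ) ∞ P).toReal ^ (1 + α) := by
  set M := (eLpNorm (Δhat - Δ) ∞ P).toReal
  have hM : 0 ≤ M := ENNReal.toReal_nonneg
  calc _ ≤ P.real {ω | |Δ ω| ≤ M} * M := integral_regret_le_measureReal_mul P hΔ hbdd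
    _ ≤ C * M ^ α * M := mul_le_mul_of_nonneg_right (hmargin M hM) hM
    _ = C * M ^ (1 + α) := by rw [Real.rpow_one_add' hM (by positivity)]; ring

/-- First comparison inequality (Lemma 2(i)): under the margin condition with exponent `α`
and constant `C`, the regret of the plug-in policy is bounded by `C · ‖Δ̂ − Δ‖_∞^{1+α}`. -/
theorem stmt_3 {Ω : Type*} [MeasurableSpace Ω] (P : Measure Ω) [IsProbabilityMeasure P]
    (Δ Δhat : Ω → ℝ) (hΔ : Measurable Δ) (hΔhat : Measurable Δhat)
    (α C : ℝ) (hα : 0 < α) (hC : 0 < C)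
    (hmargin : ∀ t : ℝ, 0 ≤ t → (P {ω | |Δ ω| ≤ t}).toReal ≤ C * t ^ α)
    (hbdd : MemLp (Δhat - Δ) ∞ P) :
    ∫ ω, Δ ω * ((if 0 < Δ ω then (1 : ℝ) else 0) - (if 0 < Δhat ω then (1 : ℝ) else 0)) ∂P
      ≤ C * (eLpNorm (Δhat - Δ) ∞ P).toReal ^ (1 + α) :=
  stmt_3_general P Δ Δhat hΔ α C hα hmargin hbdd
end

section
/- Let (Ω, F, P) be a probability space, let 1 ≤ q < ∞, and let Δ, Δ̂ : Ω → ℝ be measurable with Δ integrable and Δ̂ − Δ ∈ L^q(P). Assume Δ satisfies the margin condition with exponent α > 0 and constant C > 0, i.e. P(|Δ| ≤ t) ≤ C·t^α for all t ≥ 0. Then there exists a constant C′ > 0, depending only on C, q, and α, such that E[Δ · (1{Δ > 0} − 1{Δ̂ > 0})] ≤ C′ · ‖Δ̂ − Δ‖_{L^q(P)}^{q(1+α)/(q+α)}. -/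
/-!
Where the plug-in policy agrees with the oracle the regret vanishes; where it disagrees, `Δ̂ - Δ`
has to cross zero, so `|Δ| ≤ |Δ̂ - Δ|`. Fix a threshold `t > 0`. Points with `|Δ| ≤ t` contribute
at most `t · P(|Δ| ≤ t) ≤ C t^{1+α}` by the margin condition; at points with `t < |Δ| ≤ |Δ̂ - Δ|`
one has `|Δ| ≤ |Δ̂ - Δ|^q t^{1-q}`, which integrates to `ε^q t^{1-q}` with `ε = ‖Δ̂ - Δ‖_q`.
The choice `t = ε^{q/(q+α)}` makes both terms equal to `ε^{q(1+α)/(q+α)}`.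
-/

open MeasureTheory

noncomputable def plugInRegret (a b : ℝ) : ℝ :=
  a * ((if 0 < a then 1 else 0) - (if 0 < b then 1 else 0))

lemma plugInRegret_self (a : ℝ) : plugInRegret a a = 0 := by simp [plugInRegret]

lemma abs_plugInRegret_le (a b : ℝ) : |plugInRegret a b| ≤ |a| := by
  unfold plugInRegret
  rw [abs_mul]
  refine mul_le_of_le_one_right (abs_nonneg a) ?_
  split_ifs <;> norm_num

lemma plugInRegret_le (a b : ℝ) : plugInRegret a b ≤ if |a| ≤ |b - a| then |a| else 0 := by
  unfold plugInRegret
  split_ifs <;> cases abs_cases a <;> cases abs_cases (b - a) <;> linarith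

lemma le_rpow_mul_rpow_one_sub {t q d : ℝ} (ht : 0 < t) (hq : 1 ≤ q) (htd : t ≤ d) :
    d ≤ d ^ q * t ^ (1 - q) := by
  have hd : 0 < d := ht.trans_le htd
  have hpow : d * t ^ (q - 1) ≤ d ^ q := calc
    d * t ^ (q - 1) ≤ d * d ^ (q - 1) := by gcongr
    _ = d ^ q := by rw [← Real.rpow_one_add' hd.le (by linarith), add_sub_cancel]
  rw [show 1 - q = -(q - 1) by ring, Real.rpow_neg ht.le, ← div_eq_mul_inv,
    le_div_iff₀ (by positivity)]
  exact hpow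

lemma ite_le_ite_add_rpow_mul_rpow {t q a d : ℝ} (ht : 0 < t) (hq : 1 ≤ q) (hd : 0 ≤ d) :
    (if a ≤ d then a else 0) ≤ (if a ≤ t then t else 0) + d ^ q * t ^ (1 - q) := by
  have : 0 ≤ d ^ q * t ^ (1 - q) := by positivity
  split_ifs with had hat hat
  · linarith
  · push Not at hat
    linarith [le_rpow_mul_rpow_one_sub ht hq (hat.le.trans had)]
  · linarith
  · linarith

lemma plugInRegret_le_add {t q : ℝ} (ht : 0 < t) (hq : 1 ≤ q) (a b : ℝ) :
    plugInRegret a b ≤ (if |a| ≤ t then t else 0) + |b - a| ^ q * t ^ (1 - q) :=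
  (plugInRegret_le a b).trans
    (ite_le_ite_add_rpow_mul_rpow ht hq (abs_nonneg _))

lemma integral_norm_rpow_eq_lpNorm_rpow {α E : Type*} [MeasurableSpace α] {μ : Measure α}
    [NormedAddCommGroup E] {f : α → E} {p : ENNReal} (hp₀ : p ≠ 0) (hp : p ≠ ⊤)
    (hf : AEStronglyMeasurable f μ) :
    ∫ x, ‖f x‖ ^ p.toReal ∂μ = lpNorm f p μ ^ p.toReal := by
  rw [lpNorm_eq_integral_norm_rpow_toReal hp₀ hp hf,
    ← Real.rpow_mul (integral_nonneg fun _ => by positivity),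
    inv_mul_cancel₀ (ENNReal.toReal_ne_zero.2 ⟨hp₀, hp⟩), Real.rpow_one]

section

variable {Ω : Type*} [MeasurableSpace Ω] {P : Measure Ω} {Δ Δhat : Ω → ℝ}

lemma integrable_plugInRegret (hΔ : Measurable Δ) (hΔhat : Measurable Δhat)
    (hi : Integrable Δ P) : Integrable (fun ω => plugInRegret (Δ ω) (Δhat ω)) P := by
  refine hi.mono ?_ (ae_of_all _ fun ω => abs_plugInRegret_le _ _)
  have hsign {f : Ω → ℝ} (hf : Measurable f) :
      Measurable fun ω => if 0 < f ω then (1 : ℝ) else 0 :=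
    Measurable.ite (measurableSet_lt measurable_const hf) measurable_const measurable_const
  exact (hΔ.mul ((hsign hΔ).sub (hsign hΔhat))).aestronglyMeasurable

lemma integral_plugInRegret_le [IsFiniteMeasure P] {q t : ℝ} (hq : 1 ≤ q) (ht : 0 < t)
    (hΔ : Measurable Δ) (hΔhat : Measurable Δhat) (hi : Integrable Δ P)
    (hD : MemLp (Δhat - Δ) (ENNReal.ofReal q) P) :
    ∫ ω, plugInRegret (Δ ω) (Δhat ω) ∂P ≤
      t * P.real {ω | |Δ ω| ≤ t} + lpNorm (Δhat - Δ) (ENNReal.ofReal q) P ^ q * t ^ (1 - q) := by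
  have hp₀ : ENNReal.ofReal q ≠ 0 := (ENNReal.ofReal_pos.2 (by linarith)).ne'
  have hpq : (ENNReal.ofReal q).toReal = q := ENNReal.toReal_ofReal (by linarith)
  have hs : MeasurableSet {ω | |Δ ω| ≤ t} := measurableSet_le hΔ.abs measurable_const
  have hnear : Integrable (fun ω => if |Δ ω| ≤ t then t else 0) P :=
    (integrable_const t).indicator hs
  have hfar : Integrable (fun ω => |Δhat ω - Δ ω| ^ q * t ^ (1 - q)) P := by
    have := hD.integrable_norm_rpow hp₀ ENNReal.ofReal_ne_top
    rw [hpq] at this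
    exact this.mul_const _
  calc ∫ ω, plugInRegret (Δ ω) (Δhat ω) ∂P
      ≤ ∫ ω, ((if |Δ ω| ≤ t then t else 0) + |Δhat ω - Δ ω| ^ q * t ^ (1 - q)) ∂P :=
        integral_mono (integrable_plugInRegret hΔ hΔhat hi) (hnear.add hfar)
          fun ω => plugInRegret_le_add ht hq _ _
    _ = _ := by
      have hmoment := integral_norm_rpow_eq_lpNorm_rpow hp₀ ENNReal.ofReal_ne_top hD.1
      rw [hpq] at hmoment
      rw [integral_add hnear hfar, integral_mul_const, ← hmoment, mul_comm t]
      congr 1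
      exact integral_indicator_const t hs

end

lemma rpow_div_add_rpow_one_add {ε q α : ℝ} (hε : 0 ≤ ε) (hqα : q + α ≠ 0) :
    (ε ^ (q / (q + α))) ^ (1 + α) = ε ^ (q * (1 + α) / (q + α)) := by
  rw [← Real.rpow_mul hε]
  congr 1
  field_simp

lemma rpow_mul_rpow_div_add_rpow_one_sub {ε q α : ℝ} (hε : 0 < ε) (hqα : q + α ≠ 0) :
    ε ^ q * (ε ^ (q / (q + α))) ^ (1 - q) = ε ^ (q * (1 + α) / (q + α)) := by
  rw [← Real.rpow_mul hε.le, ← Real.rpow_add hε]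
  congr 1
  field_simp
  ring

/-- Second comparison inequality (Lemma 2(ii)): under the margin condition with exponent `α`
and constant `C`, there is a constant `C′`, depending only on `C`, `q` and `α`, such that the
regret of the plug-in policy is bounded by `C′ · ‖Δ̂ − Δ‖_{L^q}^{q(1+α)/(q+α)}`. -/
theorem stmt_4 (C q α : ℝ) (hC : 0 < C) (hq : 1 ≤ q) (hα : 0 < α) :
    ∃ C' : ℝ, 0 < C' ∧
      ∀ {Ω : Type} [MeasurableSpace Ω] (P : Measure Ω), IsProbabilityMeasure P →
        ∀ (Δ Δhat : Ω → ℝ), Measurable Δ → Measurable Δhat → Integrable Δ P →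
          MemLp (Δhat - Δ) (ENNReal.ofReal q) P →
          (∀ t : ℝ, 0 ≤ t → (P {ω | |Δ ω| ≤ t}).toReal ≤ C * t ^ α) →
          ∫ ω, Δ ω * ((if 0 < Δ ω then (1 : ℝ) else 0) - (if 0 < Δhat ω then (1 : ℝ) else 0)) ∂P
            ≤ C' * (eLpNorm (Δhat - Δ) (ENNReal.ofReal q) P).toReal ^ (q * (1 + α) / (q + α)) := by
  refine ⟨C + 1, by linarith, fun P _ Δ Δhat hΔ hΔhat hi hD hmargin => ?_⟩
  have hqα : q + α ≠ 0 := by positivity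
  change ∫ ω, plugInRegret (Δ ω) (Δhat ω) ∂P ≤ _
  rw [toReal_eLpNorm hD.1]
  set ε := lpNorm (Δhat - Δ) (ENNReal.ofReal q) P
  rcases (lpNorm_nonneg : 0 ≤ ε).eq_or_lt with hε | hε
  · have hae : Δhat - Δ =ᵐ[P] 0 :=
      (lpNorm_eq_zero hD (ENNReal.ofReal_pos.2 (by linarith)).ne').1 hε.symm
    have : ∫ ω, plugInRegret (Δ ω) (Δhat ω) ∂P = 0 := by
      refine integral_eq_zero_of_ae (hae.mono fun ω hω => ?_)
      rw [Pi.sub_apply, Pi.zero_apply, sub_eq_zero] at hω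
      simp [hω, plugInRegret_self]
    rw [this]
    exact mul_nonneg (by linarith) (by positivity)
  · set t := ε ^ (q / (q + α))
    have ht : 0 < t := by positivity
    calc ∫ ω, plugInRegret (Δ ω) (Δhat ω) ∂P
        ≤ t * P.real {ω | |Δ ω| ≤ t} + ε ^ q * t ^ (1 - q) :=
          integral_plugInRegret_le hq ht hΔ hΔhat hi hD
      _ ≤ t * (C * t ^ α) + ε ^ q * t ^ (1 - q) := by gcongr; exact hmargin t ht.le
      _ = C * t ^ (1 + α) + ε ^ q * t ^ (1 - q) := by
          rw [Real.rpow_add ht, Real.rpow_one]; ring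
      _ = (C + 1) * ε ^ (q * (1 + α) / (q + α)) := by
          rw [rpow_div_add_rpow_one_add hε.le hqα, rpow_mul_rpow_div_add_rpow_one_sub hε hqα]
          ring
end

section
/- Let f : ℝ^k → ℝ, let c > 0, and let β₀ ∈ ℝ^k be a global minimizer of f satisfying the quadratic growth condition c‖β − β₀‖² ≤ f(β) − f(β₀) for all β ∈ ℝ^k. Let ξ₁, …, ξ_m ∈ ℝ^k and let β_ξ be a global minimizer of the perturbed objective f_ξ(β) = f(β) + Σ_{j=1}^m ⟨β, ξⱼ⟩². Then c ‖β₀ − β_ξ‖² ≤ (‖β_ξ‖² + ‖β₀‖²) · Σ_{j=1}^m ‖ξⱼ‖². -/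
open Finset

theorem sum_sq_sum_mul_le_sum_sq_mul_sum_sum_sq {ι κ : Type*} [Fintype ι] [Fintype κ]
    (β : ι → ℝ) (ξ : κ → ι → ℝ) :
    ∑ j, (∑ i, β i * ξ j i) ^ 2 ≤ (∑ i, β i ^ 2) * ∑ j, ∑ i, ξ j i ^ 2 := by
  rw [mul_sum]
  exact sum_le_sum fun j _ => sum_mul_sq_le_sq_mul_sq _ _ _

theorem stmt_8_general (k m : ℕ) (f : (Fin k → ℝ) → ℝ) (c : ℝ)
    (β₀ : Fin k → ℝ)
    (hqg : ∀ β : Fin k → ℝ, c * ∑ i, (β i - β₀ i) ^ 2 ≤ f β - f β₀)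
    (ξ : Fin m → Fin k → ℝ) (βξ : Fin k → ℝ)
    (hβξ : ∀ β : Fin k → ℝ,
      f βξ + ∑ j, (∑ i, βξ i * ξ j i) ^ 2 ≤ f β + ∑ j, (∑ i, β i * ξ j i) ^ 2) :
    c * ∑ i, (β₀ i - βξ i) ^ 2
      ≤ ((∑ i, (βξ i) ^ 2) + ∑ i, (β₀ i) ^ 2) * ∑ j, ∑ i, (ξ j i) ^ 2 := by
  have hpen : 0 ≤ ∑ j, (∑ i, βξ i * ξ j i) ^ 2 := by positivity
  calc c * ∑ i, (β₀ i - βξ i) ^ 2 = c * ∑ i, (βξ i - β₀ i) ^ 2 := by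
        simp_rw [← neg_sub (βξ _), neg_sq]
    _ ≤ f βξ - f β₀ := hqg βξ
    _ ≤ ∑ j, (∑ i, β₀ i * ξ j i) ^ 2 := by linarith [hβξ β₀]
    _ ≤ (∑ i, β₀ i ^ 2) * ∑ j, ∑ i, ξ j i ^ 2 :=
        sum_sq_sum_mul_le_sum_sq_mul_sum_sum_sq β₀ ξ
    _ ≤ ((∑ i, βξ i ^ 2) + ∑ i, β₀ i ^ 2) * ∑ j, ∑ i, ξ j i ^ 2 := by
        gcongr
        exact le_add_of_nonneg_left (by positivity)

/-- Perturbation bound under quadratic growth: if `β₀` is a global minimizer of `f`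
with quadratic growth constant `c`, and `β_ξ` globally minimizes the penalized objective
`f(β) + Σⱼ ⟨β, ξⱼ⟩²`, then `c ‖β₀ − β_ξ‖² ≤ (‖β_ξ‖² + ‖β₀‖²) · Σⱼ ‖ξⱼ‖²`. -/
theorem stmt_8 (k m : ℕ) (f : (Fin k → ℝ) → ℝ) (c : ℝ) (hc : 0 < c)
    (β₀ : Fin k → ℝ) (hmin : ∀ β : Fin k → ℝ, f β₀ ≤ f β)
    (hqg : ∀ β : Fin k → ℝ, c * ∑ i, (β i - β₀ i) ^ 2 ≤ f β - f β₀)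
    (ξ : Fin m → Fin k → ℝ) (βξ : Fin k → ℝ)
    (hβξ : ∀ β : Fin k → ℝ,
      f βξ + ∑ j, (∑ i, βξ i * ξ j i) ^ 2 ≤ f β + ∑ j, (∑ i, β i * ξ j i) ^ 2) :
    c * ∑ i, (β₀ i - βξ i) ^ 2
      ≤ ((∑ i, (βξ i) ^ 2) + ∑ i, (β₀ i) ^ 2) * ∑ j, ∑ i, (ξ j i) ^ 2 :=
  stmt_8_general k m f c β₀ hqg ξ βξ hβξ
end

section
/- Let (Ω, F, P) be a probability space, let θ, θ̂ : Ω → ℝ be measurable with θ̂ − θ essentially bounded, and let ξ : Ω → ℝ be essentially bounded. Assume θ satisfies the margin condition with exponent α > 0 and constant C > 0, i.e. P(|θ| ≤ t) ≤ C·t^α for all t ≥ 0. Then |E[ξ · (1{θ̂ > 0} − 1{θ > 0})]| ≤ C · ‖ξ‖_{L^∞(P)} · ‖θ̂ − θ‖_{L^∞(P)}^α. -/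
/-!
Where `1{θ̂ > 0}` and `1{θ > 0}` disagree, `θ̂` and `θ` lie on opposite sides of `0`, so
`|θ| ≤ |θ̂ - θ| ≤ ‖θ̂ - θ‖_∞`. The integrand therefore vanishes off `{|θ| ≤ ‖θ̂ - θ‖_∞}` and is
bounded by `‖ξ‖_∞` on it, and the margin condition at `t = ‖θ̂ - θ‖_∞` bounds the measure of
this set by `C ‖θ̂ - θ‖_∞ ^ α`.
-/

open MeasureTheory
open scoped ENNReal

lemma ite_pos_sub_ite_pos_eq_zero_of_abs_sub_lt {a b : ℝ} (h : |a - b| < |b|) :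
    (if 0 < a then (1 : ℝ) else 0) - (if 0 < b then 1 else 0) = 0 := by
  have hsign : 0 < a ↔ 0 < b := by
    constructor <;> intro hpos <;> cases abs_cases (a - b) <;> cases abs_cases b <;> linarith
  simp [hsign]

lemma enorm_mul_ite_pos_sub_ite_pos_le (x a b : ℝ) :
    ‖x * ((if 0 < a then (1 : ℝ) else 0) - (if 0 < b then 1 else 0))‖ₑ ≤ ‖x‖ₑ := by
  split_ifs <;> simp

lemma enorm_le_eLpNorm_top_ae {Ω : Type*} [MeasurableSpace Ω] {P : Measure Ω} (f : Ω → ℝ) :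
    ∀ᵐ ω ∂P, ‖f ω‖ₑ ≤ eLpNorm f ∞ P := by
  simpa only [eLpNorm_exponent_top] using ae_le_eLpNormEssSup

lemma abs_le_toReal_eLpNorm_top_ae {Ω : Type*} [MeasurableSpace Ω] {P : Measure Ω}
    {f : Ω → ℝ} (hf : eLpNorm f ∞ P ≠ ∞) :
    ∀ᵐ ω ∂P, |f ω| ≤ (eLpNorm f ∞ P).toReal := by
  filter_upwards [enorm_le_eLpNorm_top_ae f] with ω hω
  simpa only [Real.enorm_eq_ofReal_abs, ENNReal.ofReal_le_iff_le_toReal hf] using hω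

theorem abs_integral_mul_ite_pos_sub_ite_pos_le {Ω : Type*} [MeasurableSpace Ω]
    (P : Measure Ω) [IsFiniteMeasure P] {θ θhat ξ : Ω → ℝ}
    (hbdd : eLpNorm (θhat - θ) ∞ P ≠ ∞) (hξ : eLpNorm ξ ∞ P ≠ ∞) :
    |∫ ω, ξ ω * ((if 0 < θhat ω then (1 : ℝ) else 0) - (if 0 < θ ω then (1 : ℝ) else 0)) ∂P|
      ≤ (eLpNorm ξ ∞ P).toReal * (P {ω | |θ ω| ≤ (eLpNorm (θhat - θ) ∞ P).toReal}).toReal := by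
  set s := {ω | |θ ω| ≤ (eLpNorm (θhat - θ) ∞ P).toReal}
  have hbound : ∀ᵐ ω ∂P,
      ‖ξ ω * ((if 0 < θhat ω then (1 : ℝ) else 0) - (if 0 < θ ω then (1 : ℝ) else 0))‖ₑ
        ≤ s.indicator (fun _ => eLpNorm ξ ∞ P) ω := by
    filter_upwards [enorm_le_eLpNorm_top_ae ξ, abs_le_toReal_eLpNorm_top_ae hbdd]
      with ω hξω hdiff
    by_cases hω : ω ∈ s
    · rw [Set.indicator_of_mem hω]
      exact (enorm_mul_ite_pos_sub_ite_pos_le _ _ _).trans hξω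
    · have hlt : |θhat ω - θ ω| < |θ ω| := hdiff.trans_lt (not_le.mp hω)
      simp [ite_pos_sub_ite_pos_eq_zero_of_abs_sub_lt hlt]
  have henorm := calc
    ‖∫ ω, ξ ω * ((if 0 < θhat ω then (1 : ℝ) else 0) - (if 0 < θ ω then (1 : ℝ) else 0)) ∂P‖ₑ
        ≤ ∫⁻ ω, ‖ξ ω * ((if 0 < θhat ω then (1 : ℝ) else 0)
            - (if 0 < θ ω then (1 : ℝ) else 0))‖ₑ ∂P := enorm_integral_le_lintegral_enorm _
    _ ≤ ∫⁻ ω, s.indicator (fun _ => eLpNorm ξ ∞ P) ω ∂P := lintegral_mono_ae hbound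
    _ ≤ eLpNorm ξ ∞ P * P s := lintegral_indicator_const_le s _
  rw [← ENNReal.toReal_mul, ← Real.norm_eq_abs, ← toReal_enorm]
  exact ENNReal.toReal_mono (ENNReal.mul_ne_top hξ (measure_ne_top P s)) henorm

theorem stmt_15_general {Ω : Type*} [MeasurableSpace Ω] (P : Measure Ω) [IsProbabilityMeasure P]
    (θ θhat : Ω → ℝ)
    (hbdd : MemLp (θhat - θ) ∞ P)
    (ξ : Ω → ℝ) (hξ : MemLp ξ ∞ P)
    (α C : ℝ)
    (hmargin : ∀ t : ℝ, 0 ≤ t → (P {ω | |θ ω| ≤ t}).toReal ≤ C * t ^ α) :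
    |∫ ω, ξ ω * ((if 0 < θhat ω then (1 : ℝ) else 0) - (if 0 < θ ω then (1 : ℝ) else 0)) ∂P|
      ≤ C * (eLpNorm ξ ∞ P).toReal * (eLpNorm (θhat - θ) ∞ P).toReal ^ α := by
  calc _ ≤ (eLpNorm ξ ∞ P).toReal
          * (P {ω | |θ ω| ≤ (eLpNorm (θhat - θ) ∞ P).toReal}).toReal :=
        abs_integral_mul_ite_pos_sub_ite_pos_le P hbdd.eLpNorm_ne_top hξ.eLpNorm_ne_top
    _ ≤ (eLpNorm ξ ∞ P).toReal * (C * (eLpNorm (θhat - θ) ∞ P).toReal ^ α) := by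
        gcongr
        exact hmargin _ ENNReal.toReal_nonneg
    _ = C * (eLpNorm ξ ∞ P).toReal * (eLpNorm (θhat - θ) ∞ P).toReal ^ α := by ring

/-- Bias bound for plug-in estimators of non-smooth functionals (Appendix C, Lemma 3):
under the margin condition for `θ` with exponent `α` and constant `C`,
`|E[ξ · (1{θ̂ > 0} − 1{θ > 0})]| ≤ C · ‖ξ‖_∞ · ‖θ̂ − θ‖_∞^α`. -/
theorem stmt_15 {Ω : Type*} [MeasurableSpace Ω] (P : Measure Ω) [IsProbabilityMeasure P]
    (θ θhat : Ω → ℝ) (hθ : Measurable θ) (hθhat : Measurable θhat)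
    (hbdd : MemLp (θhat - θ) ∞ P)
    (ξ : Ω → ℝ) (hξ : MemLp ξ ∞ P)
    (α C : ℝ) (hα : 0 < α) (hC : 0 < C)
    (hmargin : ∀ t : ℝ, 0 ≤ t → (P {ω | |θ ω| ≤ t}).toReal ≤ C * t ^ α) :
    |∫ ω, ξ ω * ((if 0 < θhat ω then (1 : ℝ) else 0) - (if 0 < θ ω then (1 : ℝ) else 0)) ∂P|
      ≤ C * (eLpNorm ξ ∞ P).toReal * (eLpNorm (θhat - θ) ∞ P).toReal ^ α :=
  stmt_15_general P θ θhat hbdd ξ hξ α C hmargin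
end
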